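/- arXiv:2203.16713 — 3 statements merged into one kernel-verified Lean document; each statement's English description precedes it below -/
import Mathlib

section
/- If F is a family of finite sets with universe U, and F' is the family obtained by replacing each S in F with S' = {u⁺, u⁻ : u ∈ S} over the doubled universe U' = {u⁺, u⁻ : u ∈ U}, then there exists a subfamily of F of size at most c covering U if and only if there exists a subfamily of F' of size at most c whose union misses at most one element of U'. -/
/-!
The map `S ↦ S × {0,1}` is injective and commutes with unions, so the subfamilies of `F'` are
exactly the images of subfamilies of `F`, with the same cardinality. An element of `U` left
uncovered leaves both of its copies uncovered, so missing at most one element of `U'` already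
means missing none.
-/

namespace Finset

variable {α β : Type*}

theorem product_left_injective {t : Finset β} (ht : t.Nonempty) :
    Function.Injective fun s : Finset α => s ×ˢ t := by
  intro s s' h
  simpa only [← coe_inj, coe_product, Set.prod_eq_iff_eq (coe_nonempty.mpr ht)] using
    congrArg ((↑) : Finset (α × β) → Set (α × β)) h

variable [DecidableEq α] [DecidableEq β]

theorem sup_image_product_left (G : Finset (Finset α)) (t : Finset β) :
    (G.image (· ×ˢ t)).sup id = G.sup id ×ˢ t := by
  ext ⟨a, b⟩
  simp only [mem_sup, mem_image, id, mem_product, exists_exists_and_eq_and]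
  tauto

theorem product_sdiff_product_left (s s' : Finset α) (t : Finset β) :
    s ×ˢ t \ s' ×ˢ t = (s \ s') ×ˢ t := by
  grind

theorem card_product_sdiff_product_left_le_one_iff {s s' : Finset α} {t : Finset β}
    (ht : 2 ≤ #t) : #(s ×ˢ t \ s' ×ˢ t) ≤ 1 ↔ s ⊆ s' := by
  rw [product_sdiff_product_left, card_product, ← sdiff_eq_empty_iff_subset, ← card_eq_zero]
  constructor
  · intro h
    nlinarith
  · intro h
    simp [h]

end Finset

/-- Set Cover on (U, F) with budget c is equivalent to Almost Set Cover
on the doubled instance (U × {0,1}, {S × {0,1} : S ∈ F}) with budget c. -/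
theorem almost_set_cover_reduction {α : Type*} [DecidableEq α]
    (U : Finset α) (F : Finset (Finset α)) (hU : F.sup id = U) (c : ℕ) :
    (∃ F' ⊆ F, F'.card ≤ c ∧ F'.sup id = U) ↔
    (∃ K ⊆ F.image (fun S => S ×ˢ (Finset.univ : Finset (Fin 2))), K.card ≤ c ∧
      ((U ×ˢ (Finset.univ : Finset (Fin 2))) \ K.sup id).card ≤ 1) := by
  constructor
  · rintro ⟨G, hGF, hcard, hcover⟩
    refine ⟨G.image (· ×ˢ Finset.univ), Finset.image_subset_image hGF,
      Finset.card_image_le.trans hcard, ?_⟩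
    rw [Finset.sup_image_product_left, hcover, sdiff_self]
    simp
  · rintro ⟨K, hKF, hcard, hmiss⟩
    obtain ⟨G, hGF, rfl⟩ := Finset.subset_image_iff.mp hKF
    rw [Finset.card_image_of_injective _ (Finset.product_left_injective Finset.univ_nonempty)]
      at hcard
    rw [Finset.sup_image_product_left,
      Finset.card_product_sdiff_product_left_le_one_iff (by simp)] at hmiss
    exact ⟨G, hGF, hcard, (hU ▸ Finset.sup_mono hGF).antisymm hmiss⟩
end

section
/- In a game of Wordle with alphabet Σ of size σ, the strategy of always guessing a feasible word guarantees a win within σ guesses: more precisely, if for each position i we track the set S(i) of symbols appearing at position i among currently feasible words, then after each feasible guess, each S(i) either becomes a singleton or strictly decreases in size. -/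
/-!
Every word still feasible after guessing `p` agrees with `p` at the green positions and differs
from it at the others, while the secret itself stays feasible. So at a green position the feasible
symbols collapse to `{p i}`, and at any other position `p i` is removed from a set that can only
shrink, since the feasible words form a subset of the dictionary.
-/

namespace Wordle

variable {ι A : Type*}

/-- `q` is consistent with the green/non-green feedback of guess `p` against secret `w`. -/
def IsConsistent (p w q : ι → A) : Prop :=
  ∀ j, (p j = w j → q j = p j) ∧ (p j ≠ w j → q j ≠ p j)

theorem isConsistent_secret (p w : ι → A) : IsConsistent p w w :=
  fun _ => ⟨Eq.symm, Ne.symm⟩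

variable [DecidableEq A] {p w : ι → A} {s : Finset (ι → A)} {i : ι}

theorem image_eval_eq_singleton_of_green (hs : ∀ q ∈ s, IsConsistent p w q) (hw : w ∈ s)
    (hi : p i = w i) : s.image (· i) = {p i} := by
  refine Finset.eq_singleton_iff_unique_mem.mpr ⟨Finset.mem_image.mpr ⟨w, hw, hi.symm⟩, ?_⟩
  intro x hx
  obtain ⟨q, hq, rfl⟩ := Finset.mem_image.mp hx
  exact (hs q hq i).1 hi

theorem image_eval_subset_sdiff_of_not_green {D : Finset (ι → A)} (hsD : s ⊆ D)
    (hs : ∀ q ∈ s, IsConsistent p w q) (hi : p i ≠ w i) :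
    s.image (· i) ⊆ D.image (· i) \ {p i} := by
  intro x hx
  obtain ⟨q, hq, rfl⟩ := Finset.mem_image.mp hx
  exact Finset.mem_sdiff.mpr
    ⟨Finset.image_subset_image hsD hx, Finset.notMem_singleton.mpr ((hs q hq i).2 hi)⟩

end Wordle

open Wordle in
theorem wordle_position_sets_shrink_general {k : ℕ} {A : Type*} [DecidableEq A]
    (D : Finset (Fin k → A)) (p w : Fin k → A) (hw : w ∈ D) (i : Fin k) :
    ((p i = w i →
        (D.filter (fun p' => ∀ j, (p j = w j → p' j = p j) ∧ (p j ≠ w j → p' j ≠ p j))).image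
          (fun w' => w' i) = {p i}) ∧
     (p i ≠ w i →
        (D.filter (fun p' => ∀ j, (p j = w j → p' j = p j) ∧ (p j ≠ w j → p' j ≠ p j))).image
          (fun w' => w' i) ⊆ (D.image (fun w' => w' i)) \ {p i})) := by
  have hfeasible : ∀ q ∈ D.filter (fun p' => ∀ j, (p j = w j → p' j = p j) ∧
      (p j ≠ w j → p' j ≠ p j)), IsConsistent p w q :=
    fun _ hq => (Finset.mem_filter.mp hq).2
  refine ⟨fun hi => image_eval_eq_singleton_of_green hfeasible ?_ hi,
    fun hi => image_eval_subset_sdiff_of_not_green (Finset.filter_subset _ D) hfeasible hi⟩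
  exact Finset.mem_filter.mpr ⟨hw, isConsistent_secret p w⟩

/-- after a feasible guess `p` against secret `w`, the set of symbols
appearing at position `i` among words still feasible either becomes the singleton
`{p i}` (green position) or is contained in `S(i) \ {p i}` (non-green position). -/
theorem wordle_position_sets_shrink {k : ℕ} {A : Type*} [Fintype A] [DecidableEq A]
    (D : Finset (Fin k → A)) (p w : Fin k → A) (hp : p ∈ D) (hw : w ∈ D) (i : Fin k) :
    ((p i = w i →
        (D.filter (fun p' => ∀ j, (p j = w j → p' j = p j) ∧ (p j ≠ w j → p' j ≠ p j))).image
          (fun w' => w' i) = {p i}) ∧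
     (p i ≠ w i →
        (D.filter (fun p' => ∀ j, (p j = w j → p' j = p j) ∧ (p j ≠ w j → p' j ≠ p j))).image
          (fun w' => w' i) ⊆ (D.image (fun w' => w' i)) \ {p i})) :=
  wordle_position_sets_shrink_general D p w hw i
end

section
/- Let G be a 4-regular graph and D_G its associated Wordle dictionary. Any winning guessing strategy for D_G requires at least γ(G) guesses: for any sequence of γ(G) − 1 guesses, the set of first symbols of the guesses fails to dominate some vertex v, and the word w'_v = (v,v,v,v,v) remains feasible and unguessed when all feedback is gray. Hence W(D_G) ≥ γ(G). -/
/-- History of feedbacks after `n` guesses made by strategy `strat` against secret `w`. -/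
def hist {α M : Type*} (strat : List M → α) (f : α → α → M) (w : α) : ℕ → List M
  | 0 => []
  | n + 1 => hist strat f w n ++ [f (strat (hist strat f w n)) w]

/-- The guesser can guarantee to discover any secret word of `D` within `ℓ` guesses. -/
def WinsWithin {α M : Type*} (D : Finset α) (f : α → α → M) (ℓ : ℕ) : Prop :=
  ∃ strat : List M → α,
    (∀ w ∈ D, ∀ t, t < ℓ → strat (hist strat f w t) ∈ D) ∧
    ∀ w ∈ D, ∃ t < ℓ, strat (hist strat f w t) = w

/-- Minimum number of guesses sufficient for a guaranteed win. -/
noncomputable def WNum {α M : Type*} (D : Finset α) (f : α → α → M) : ℕ :=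
  sInf {ℓ | WinsWithin D f ℓ}

/-- Wordle feedback: green positions, and for each letter the number of yellow marks
(the standard marking rule assigns, per letter, `min` of its non-green multiplicities
in the guess and in the secret). -/
def feedback {V : Type*} [DecidableEq V] (p w : Fin 5 → V) : (Fin 5 → Bool) × (V → ℕ) :=
  ⟨fun i => decide (p i = w i),
   fun a => min ((Finset.univ.filter (fun i => p i = a ∧ p i ≠ w i)).card)
                ((Finset.univ.filter (fun i => w i = a ∧ p i ≠ w i)).card)⟩

/-- The word `w_v = (v, n₁, n₂, n₃, n₄)`. -/
def wv {V : Type*} (nbr : V → Fin 4 → V) (v : V) : Fin 5 → V :=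
  fun i => Fin.cases v (fun j => nbr v j) i

/-- The constant word `w'_v = (v,v,v,v,v)`. -/
def wv' {V : Type*} (v : V) : Fin 5 → V := fun _ => v

/-- The dictionary `D_G` built from the graph. -/
def DG {V : Type*} [Fintype V] [DecidableEq V] (nbr : V → Fin 4 → V) :
    Finset (Fin 5 → V) :=
  Finset.univ.image (wv nbr) ∪ Finset.univ.image wv'

/-- `S` is a dominating set of `G`. -/
def Dominating {V : Type*} (G : SimpleGraph V) (S : Finset V) : Prop :=
  ∀ u, ∃ v ∈ S, u = v ∨ G.Adj v u

/-- The domination number `γ(G)`. -/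
noncomputable def gamma {V : Type*} (G : SimpleGraph V) : ℕ :=
  sInf {n | ∃ S : Finset V, S.card ≤ n ∧ Dominating G S}

/-!
Answer every guess with all-gray feedback. A guess `p ∈ D_G` only uses the symbol `p 0` and
neighbours of `p 0`, so it is all-gray against `w'_v` whenever `p 0` does not dominate `v`.
Fewer than `γ(G)` guesses have first symbols forming a non-dominating set, so some `w'_v` is
still consistent with all-gray feedback and has not been guessed: the guesser has not won.
-/

section Game

variable {α M : Type*} {D : Finset α} {f : α → α → M}

lemma hist_length (strat : List M → α) (f : α → α → M) (w : α) (t : ℕ) :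
    (hist strat f w t).length = t := by
  induction t with
  | zero => rfl
  | succ n ih => simp [hist, ih]

lemma hist_eq_replicate (strat : List M → α) (w : α) (m : M) (t : ℕ)
    (h : ∀ s < t, f (strat (List.replicate s m)) w = m) :
    hist strat f w t = List.replicate t m := by
  induction t with
  | zero => rfl
  | succ n ih =>
    rw [hist, ih fun s hs => h s (hs.trans n.lt_succ_self), h n n.lt_succ_self,
      List.replicate_succ']

lemma winsWithin_card [Nonempty α] (D : Finset α) (f : α → α → M) : WinsWithin D f D.card := by
  classical
  refine ⟨fun h => D.toList.getD h.length (Classical.arbitrary α), ?_, ?_⟩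
  · intro w _ t ht
    rw [← Finset.length_toList] at ht
    simp only [hist_length, List.getD_eq_getElem _ _ ht]
    exact Finset.mem_toList.mp (List.getElem_mem _)
  · intro w hw
    obtain ⟨t, ht, hget⟩ := List.mem_iff_getElem.mp (Finset.mem_toList.mpr hw)
    exact ⟨t, by rwa [Finset.length_toList] at ht, by
      simp only [hist_length, List.getD_eq_getElem _ _ ht, hget]⟩

lemma le_of_winsWithin_of_constant_answer (m : M) {k ℓ : ℕ}
    (hconsistent : ∀ L : List α, (∀ p ∈ L, p ∈ D) → L.length < k →
      ∃ w ∈ D, w ∉ L ∧ ∀ p ∈ L, f p w = m)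
    (hwins : WinsWithin D f ℓ) : k ≤ ℓ := by
  obtain ⟨strat, hmem, hwin⟩ := hwins
  by_contra! hℓk
  set g : ℕ → α := fun s => strat (List.replicate s m)
  have consistent_secret (s : ℕ) (hs : s ≤ ℓ) (hD : ∀ a < s, g a ∈ D) :
      ∃ w ∈ D, w ∉ (List.range s).map g ∧
        ∀ t ≤ s, hist strat f w t = List.replicate t m := by
    obtain ⟨w, hwD, hwL, hm⟩ := hconsistent ((List.range s).map g)
      (by simpa using hD) (by rw [List.length_map, List.length_range]; omega)
    refine ⟨w, hwD, hwL, fun t ht => hist_eq_replicate strat w m t fun a ha => ?_⟩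
    exact hm (g a) (List.mem_map.mpr ⟨a, List.mem_range.mpr (by omega), rfl⟩)
  have guesses_mem : ∀ s ≤ ℓ, ∀ a < s, g a ∈ D := by
    intro s
    induction s with
    | zero => intro _ a ha; omega
    | succ s ih =>
      intro hs a ha
      rcases Nat.lt_succ_iff_lt_or_eq.mp ha with ha | rfl
      · exact ih (by omega) a ha
      · obtain ⟨w, hwD, -, hhist⟩ := consistent_secret a (by omega) (ih (by omega))
        simpa [hhist a le_rfl] using hmem w hwD a (by omega)
  obtain ⟨w, hwD, hwL, hhist⟩ := consistent_secret ℓ le_rfl (guesses_mem ℓ le_rfl)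
  obtain ⟨t, ht, hwt⟩ := hwin w hwD
  rw [hhist t ht.le] at hwt
  exact hwL (List.mem_map.mpr ⟨t, List.mem_range.mpr ht, hwt⟩)

lemma le_wNum_of_constant_answer [Nonempty α] (m : M) {k : ℕ}
    (hconsistent : ∀ L : List α, (∀ p ∈ L, p ∈ D) → L.length < k →
      ∃ w ∈ D, w ∉ L ∧ ∀ p ∈ L, f p w = m) :
    k ≤ WNum D f :=
  le_csInf ⟨_, winsWithin_card D f⟩ fun _ => le_of_winsWithin_of_constant_answer m hconsistent

end Game

section Domination

variable {V : Type*} (G : SimpleGraph V)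

lemma gamma_le_card {S : Finset V} (hS : Dominating G S) : gamma G ≤ S.card :=
  Nat.sInf_le ⟨S, le_rfl, hS⟩

lemma gamma_pos [Fintype V] [Nonempty V] : 0 < gamma G := by
  obtain ⟨S, hSγ, hS⟩ : gamma G ∈ {n | ∃ S : Finset V, S.card ≤ n ∧ Dominating G S} :=
    Nat.sInf_mem ⟨_, Finset.univ, le_rfl, fun u => ⟨u, Finset.mem_univ u, Or.inl rfl⟩⟩
  obtain ⟨v, hv, -⟩ := hS (Classical.arbitrary V)
  exact (Finset.card_pos.mpr ⟨v, hv⟩).trans_le hSγ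

lemma exists_not_dominated_of_length_lt_gamma [DecidableEq V] (L : List (Fin 5 → V))
    (hL : L.length < gamma G) :
    ∃ v, wv' v ∉ L ∧ ∀ p ∈ L, ¬(p 0 = v ∨ G.Adj (p 0) v) := by
  set S := (L.map (· 0)).toFinset
  have hS : ¬Dominating G S := fun hS =>
    (gamma_le_card G hS).not_gt ((List.toFinset_card_le _).trans_lt (by simpa using hL))
  obtain ⟨v, hv⟩ : ∃ v, ∀ u ∈ S, ¬(v = u ∨ G.Adj u v) := by
    simpa [Dominating] using hS
  refine ⟨v, fun hvL => hv v ?_ (Or.inl rfl), fun p hp hpv => hv (p 0) ?_ ?_⟩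
  · exact List.mem_toFinset.mpr (List.mem_map.mpr ⟨wv' v, hvL, rfl⟩)
  · exact List.mem_toFinset.mpr (List.mem_map.mpr ⟨p, hp, rfl⟩)
  · exact hpv.imp Eq.symm id

end Domination

section Dictionary

variable {V : Type*} [DecidableEq V]

lemma feedback_eq_of_disjoint {p w : Fin 5 → V} (h : ∀ i j, p i ≠ w j) :
    feedback p w = (fun _ => false, fun _ => 0) := by
  refine Prod.ext (funext fun i => decide_eq_false (h i i)) (funext fun a => ?_)
  by_cases ha : ∃ i, p i = a
  · obtain ⟨i, rfl⟩ := ha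
    suffices (Finset.univ.filter fun j => w j = p i ∧ p j ≠ w j) = ∅ by simp [feedback, this]
    exact Finset.filter_eq_empty_iff.mpr fun j _ hj => h i j hj.1.symm
  · suffices (Finset.univ.filter fun j => p j = a ∧ p j ≠ w j) = ∅ by simp [feedback, this]
    exact Finset.filter_eq_empty_iff.mpr fun j _ hj => ha ⟨j, hj.1⟩

variable [Fintype V] {G : SimpleGraph V} {nbr : V → Fin 4 → V}

lemma wv'_mem_DG (nbr : V → Fin 4 → V) (v : V) : wv' v ∈ DG nbr :=
  Finset.mem_union_right _ (Finset.mem_image_of_mem _ (Finset.mem_univ v))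

lemma eq_or_adj_of_mem_DG (hadj : ∀ v j, G.Adj v (nbr v j)) {p : Fin 5 → V}
    (hp : p ∈ DG nbr) (i : Fin 5) : p i = p 0 ∨ G.Adj (p 0) (p i) := by
  simp only [DG, Finset.mem_union, Finset.mem_image, Finset.mem_univ, true_and] at hp
  rcases hp with ⟨u, rfl⟩ | ⟨u, rfl⟩
  · exact Fin.cases (Or.inl rfl) (fun j => Or.inr (hadj u j)) i
  · exact Or.inl rfl

lemma feedback_wv'_of_not_dominated (hadj : ∀ v j, G.Adj v (nbr v j)) {p : Fin 5 → V}
    (hp : p ∈ DG nbr) {v : V} (hv : ¬(p 0 = v ∨ G.Adj (p 0) v)) :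
    feedback p (wv' v) = (fun _ => false, fun _ => 0) :=
  feedback_eq_of_disjoint fun i _ hi => hv <| by
    simpa only [wv', hi, eq_comm] using eq_or_adj_of_mem_DG hadj hp i

end Dictionary

theorem wordle_lower_bound_domination_general {V : Type*} [Fintype V] [DecidableEq V] [Nonempty V]
    (G : SimpleGraph V) [DecidableRel G.Adj] (nbr : V → Fin 4 → V)
    (hnbr : ∀ v, Finset.univ.image (nbr v) = G.neighborFinset v) :
    (∀ L : List (Fin 5 → V), (∀ p ∈ L, p ∈ DG nbr) → L.length = gamma G - 1 →
      ∃ v, wv' v ∉ L ∧ ∀ p ∈ L, ¬(p 0 = v ∨ G.Adj (p 0) v)) ∧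
    gamma G ≤ WNum (DG nbr) feedback := by
  have hadj (v : V) (j : Fin 4) : G.Adj v (nbr v j) := by
    rw [← G.mem_neighborFinset, ← hnbr]
    exact Finset.mem_image_of_mem _ (Finset.mem_univ j)
  refine ⟨fun L _ hL => exists_not_dominated_of_length_lt_gamma G L ?_, ?_⟩
  · have := gamma_pos G
    omega
  · refine le_wNum_of_constant_answer (fun _ => false, fun _ => 0) fun L hLD hL => ?_
    obtain ⟨v, hvL, hv⟩ := exists_not_dominated_of_length_lt_gamma G L hL
    exact ⟨wv' v, wv'_mem_DG nbr v, hvL,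
      fun p hp => feedback_wv'_of_not_dominated hadj (hLD p hp) (hv p hp)⟩

/-- any sequence of `γ(G) - 1` guesses from `D_G` leaves some vertex `v`
undominated by the first symbols of the guesses, with `w'_v` unguessed (and feasible
when all feedback is gray); hence `γ(G) ≤ W(D_G)`. -/
theorem wordle_lower_bound_domination {V : Type*} [Fintype V] [DecidableEq V] [Nonempty V]
    (G : SimpleGraph V) [DecidableRel G.Adj] (nbr : V → Fin 4 → V)
    (h4 : ∀ v, (G.neighborFinset v).card = 4)
    (hnbr : ∀ v, Finset.univ.image (nbr v) = G.neighborFinset v) :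
    (∀ L : List (Fin 5 → V), (∀ p ∈ L, p ∈ DG nbr) → L.length = gamma G - 1 →
      ∃ v, wv' v ∉ L ∧ ∀ p ∈ L, ¬(p 0 = v ∨ G.Adj (p 0) v)) ∧
    gamma G ≤ WNum (DG nbr) feedback :=
  wordle_lower_bound_domination_general G nbr hnbr
end
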